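/- Let $d \ge 2$ be an integer, $0 < C_+ \le C_-$, $A_+, B_+ > 0$, and $V_\infty > 0$. There exist constants $\gamma_0 > 0$, $c_0 > 0$, and $\bar{t} > 0$, depending only on $d, C_+, C_-, A_+, B_+, V_\infty$, with the following property. Let $\gamma \in (0, \gamma_0]$, let $L \ge 1$ satisfy $L^{-(d-1)} \le c_0 \gamma$, set $V_0 = V_\infty - \gamma$ (assumed positive), and let $V : [0,\infty) \to \mathbb{R}$ be continuous with $V(0) = V_0$, $V(s) > V_0$ for all $s > 0$, and $\gamma e^{-C_- s} \le V_\infty - V(s) \le \gamma e^{-C_+ s} + \gamma^3 \frac{A_+}{(1+s)^{d+2}} + L^{-(d-1)} \frac{B_+}{(1+s/L)^{d-1}}$ for all $s \ge 0$. Then for every $t \ge \bar{t}/2$ the set $\{ s \in (0, t) : V(s) \ge (V_0 + \langle V \rangle_{s,t})/2 \}$ has a minimum $s_0 = s_0(t)$, and $\frac{1}{C_-} \log \frac{3}{2} \le s_0 \le \frac{1}{C_+} \log 4$. -/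

import Mathlib

/-!
Write `D = V∞ - V` for the drag, so that `γ = V∞ - V₀` and the defining inequality of the set
becomes `2 D(s) ≤ γ + ⟨D⟩_{s,t}`. For small `γ` and `L^{-(d-1)} ≤ c₀ γ` the error terms are at
most `2γ/9`, so `γ e^{-C₋ s} ≤ D(s) ≤ γ e^{-C₊ s} + 2γ/9`, and `⟨D⟩_{s,t} ≤ γ/3` once
`t - s ≥ 9/C₊`. At `b = C₊⁻¹ log 4` we get `2 D(b) ≤ γ/2 + 4γ/9 < γ`, so `b` lies in the set,
while for `s < a = C₋⁻¹ log(3/2)` we get `2 D(s) > 4γ/3 ≥ γ + ⟨D⟩_{s,t}`, so the set lies in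
`[a, ∞)`. By continuity of `V` and of `s ↦ ⟨V⟩_{s,t}` its part in `[a, b]` is compact, and the
least element of that part is the least element of the whole set.
-/

open MeasureTheory Real

/-- Time average `⟨V⟩_{s,t} = (t-s)⁻¹ ∫_s^t V(σ) dσ`. -/
noncomputable def avg (V : ℝ → ℝ) (s t : ℝ) : ℝ :=
  (t - s)⁻¹ * ∫ σ in s..t, V σ

open Set intervalIntegral

theorem exists_isLeast_of_isCompact_inter_Iic {α : Type*} [LinearOrder α] [TopologicalSpace α]
    [ClosedIicTopology α] {S : Set α} {b : α} (hb : b ∈ S) (hK : IsCompact (S ∩ Iic b)) :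
    ∃ m, IsLeast S m ∧ m ≤ b := by
  obtain ⟨m, ⟨hmS, hmb⟩, hmin⟩ := hK.exists_isLeast ⟨b, hb, le_rfl⟩
  refine ⟨m, ⟨hmS, fun s hs => ?_⟩, hmb⟩
  rcases le_total s b with hsb | hbs
  · exact hmin ⟨hs, hsb⟩
  · exact hmb.trans hbs

theorem exp_neg_mul_log_div {c x : ℝ} (hc : c ≠ 0) (hx : 0 < x) :
    exp (-c * (log x / c)) = x⁻¹ := by
  rw [neg_mul, mul_div_cancel₀ _ hc, exp_neg, exp_log hx]

theorem integral_exp_neg_mul {c : ℝ} (hc : c ≠ 0) (s t : ℝ) :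
    ∫ σ in s..t, exp (-c * σ) = (exp (-c * s) - exp (-c * t)) / c := by
  rw [integral_comp_mul_left (fun x => exp x) (neg_ne_zero.2 hc), integral_exp, smul_eq_mul]
  field_simp
  ring

theorem avg_const_sub {V : ℝ → ℝ} {s t : ℝ} (c : ℝ) (hst : s ≠ t)
    (hV : IntervalIntegrable V volume s t) :
    avg (fun σ => c - V σ) s t = c - avg V s t := by
  have hts : t - s ≠ 0 := sub_ne_zero.2 hst.symm
  simp only [avg, integral_sub intervalIntegrable_const hV, intervalIntegral.integral_const,
    smul_eq_mul]
  field_simp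

theorem avg_nonneg {f : ℝ → ℝ} {s t : ℝ} (hst : s ≤ t) (hf : ∀ σ ∈ Icc s t, 0 ≤ f σ) :
    0 ≤ avg f s t :=
  mul_nonneg (inv_nonneg.2 (sub_nonneg.2 hst)) (integral_nonneg hst hf)

theorem avg_le_of_le_exp_add {f : ℝ → ℝ} {c γ ε s t : ℝ} (hc : 0 < c) (hγ : 0 ≤ γ)
    (hs : 0 ≤ s) (hst : s < t) (hf : IntervalIntegrable f volume s t)
    (hfle : ∀ σ ∈ Icc s t, f σ ≤ γ * exp (-c * σ) + ε) :
    avg f s t ≤ γ / (c * (t - s)) + ε := by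
  have hts : 0 < t - s := sub_pos.2 hst
  have hexp : IntervalIntegrable (fun σ => γ * exp (-c * σ)) volume s t := by
    apply Continuous.intervalIntegrable; fun_prop
  have hint : ∫ σ in s..t, f σ ≤ γ / c + ε * (t - s) :=
    calc ∫ σ in s..t, f σ ≤ ∫ σ in s..t, (γ * exp (-c * σ) + ε) :=
          integral_mono_on hst.le hf (hexp.add intervalIntegrable_const) hfle
      _ = γ * ((exp (-c * s) - exp (-c * t)) / c) + ε * (t - s) := by
          rw [integral_add hexp intervalIntegrable_const, intervalIntegral.integral_const_mul,
            integral_exp_neg_mul hc.ne', intervalIntegral.integral_const, smul_eq_mul,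
            mul_comm ε]
      _ ≤ γ / c + ε * (t - s) := by
          have : exp (-c * s) ≤ 1 :=
            exp_le_one_iff.2 (by rw [neg_mul, neg_nonpos]; exact mul_nonneg hc.le hs)
          have : 0 < exp (-c * t) := exp_pos _
          rw [mul_div_assoc']
          gcongr
          exact mul_le_of_le_one_right hγ (by linarith)
  calc avg f s t ≤ (t - s)⁻¹ * (γ / c + ε * (t - s)) :=
        mul_le_mul_of_nonneg_left hint (inv_nonneg.2 hts.le)
    _ = γ / (c * (t - s)) + ε := by field_simp

/-- `s₀(t)` of the paper is the least element of `midpointSet V V₀ t`. -/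
def midpointSet (V : ℝ → ℝ) (V₀ t : ℝ) : Set ℝ :=
  {s | s ∈ Ioo 0 t ∧ (V₀ + avg V s t) / 2 ≤ V s}

theorem mem_midpointSet_iff {V : ℝ → ℝ} {c γ s t : ℝ} (hs : s ∈ Ioo 0 t)
    (hV : IntervalIntegrable V volume s t) :
    s ∈ midpointSet V (c - γ) t ↔ 2 * (c - V s) ≤ γ + avg (fun σ => c - V σ) s t := by
  rw [midpointSet, mem_ofPred_eq, and_iff_right hs, avg_const_sub c hs.2.ne hV]
  constructor <;> intro h <;> linarith

theorem continuousOn_avg_left {V : ℝ → ℝ} {p t : ℝ} (hV : IntegrableOn V (uIcc p t)) :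
    ContinuousOn (fun s => avg V s t) (Ico p t) :=
  ((continuousOn_const.sub continuousOn_id).inv₀ fun _ hs => sub_ne_zero.2 hs.2.ne').mul
    ((continuousOn_primitive_interval_left hV).mono (Ico_subset_Icc_self.trans Icc_subset_uIcc))

theorem isCompact_midpointSet_inter_Iic {V : ℝ → ℝ} {V₀ a b t : ℝ}
    (hV : ContinuousOn V (Icc a t)) (ha : 0 < a) (hab : a ≤ b) (hbt : b < t)
    (hle : ∀ s ∈ midpointSet V V₀ t, a ≤ s) :
    IsCompact (midpointSet V V₀ t ∩ Iic b) := by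
  have hsub : Icc a b ⊆ Ico a t := Icc_subset_Ico_right hbt
  have hset : midpointSet V V₀ t ∩ Iic b = {s ∈ Icc a b | (V₀ + avg V s t) / 2 ≤ V s} := by
    ext s
    constructor
    · rintro ⟨hs, hsb⟩
      exact ⟨⟨hle s hs, hsb⟩, hs.2⟩
    · rintro ⟨⟨has, hsb⟩, hs⟩
      exact ⟨⟨⟨ha.trans_le has, hsb.trans_lt hbt⟩, hs⟩, hsb⟩
  have havg : ContinuousOn (fun s => avg V s t) (Icc a b) := by
    refine (continuousOn_avg_left ?_).mono hsub
    rw [uIcc_of_le (hab.trans hbt.le)]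
    exact hV.integrableOn_Icc
  rw [hset]
  exact isCompact_Icc.of_isClosed_subset
    (isClosed_Icc.isClosed_le ((continuousOn_const.add havg).div_const 2)
      (hV.mono (hsub.trans Ico_subset_Icc_self)))
    (sep_subset _ _)

theorem avg_drag_le {V : ℝ → ℝ} {Vinf γ c s t : ℝ} (hc : 0 < c) (hγ : 0 ≤ γ)
    (hV : ContinuousOn V (Ici 0))
    (hup : ∀ σ, 0 ≤ σ → Vinf - V σ ≤ γ * exp (-c * σ) + 2 * γ / 9)
    (hs : 0 ≤ s) (hst : s + 9 / c ≤ t) :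
    avg (fun σ => Vinf - V σ) s t ≤ γ / 3 := by
  have h9 : 9 ≤ c * (t - s) := (div_le_iff₀' hc).1 (by linarith)
  have hlt : s < t := by linarith [show 0 < 9 / c by positivity]
  have hint : IntervalIntegrable (fun σ => Vinf - V σ) volume s t :=
    intervalIntegrable_const.sub ((hV.mono fun _ hσ => hs.trans hσ.1).intervalIntegrable_of_Icc
      hlt.le)
  have havg := avg_le_of_le_exp_add hc hγ hs hlt hint fun σ hσ => hup σ (hs.trans hσ.1)
  have : γ / (c * (t - s)) ≤ γ / 9 := div_le_div_of_nonneg_left hγ (by norm_num) h9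
  linarith

theorem exists_isLeast_midpointSet {V : ℝ → ℝ} {Vinf γ Cp Cm t : ℝ} (hCp : 0 < Cp)
    (hCpm : Cp ≤ Cm) (hγ : 0 < γ) (hV : ContinuousOn V (Ici 0))
    (hlow : ∀ s, 0 ≤ s → γ * exp (-Cm * s) ≤ Vinf - V s)
    (hup : ∀ s, 0 ≤ s → Vinf - V s ≤ γ * exp (-Cp * s) + 2 * γ / 9)
    (ht : log 4 / Cp + 9 / Cp ≤ t) :
    ∃ s₀, IsLeast (midpointSet V (Vinf - γ) t) s₀ ∧ log (3 / 2) / Cm ≤ s₀ ∧ s₀ ≤ log 4 / Cp := by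
  have hCm : 0 < Cm := hCp.trans_le hCpm
  set a := log (3 / 2) / Cm
  set b := log 4 / Cp
  have ha : 0 < a := div_pos (log_pos (by norm_num)) hCm
  have hab : a ≤ b :=
    div_le_div₀ (log_pos (by norm_num)).le (log_le_log (by norm_num) (by norm_num)) hCp hCpm
  have hbt : b < t := by linarith [show 0 < 9 / Cp by positivity]
  have hint : ∀ s, 0 ≤ s → s ≤ t → IntervalIntegrable V volume s t := fun s hs hst =>
    (hV.mono fun _ hσ => hs.trans hσ.1).intervalIntegrable_of_Icc hst
  have hb : b ∈ midpointSet V (Vinf - γ) t := by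
    have hb₀ : 0 ≤ b := ha.le.trans hab
    refine (mem_midpointSet_iff ⟨ha.trans_le hab, hbt⟩ (hint b hb₀ hbt.le)).2 ?_
    have hDb := hup b hb₀
    rw [exp_neg_mul_log_div hCp.ne' (by norm_num)] at hDb
    have := avg_nonneg (f := fun σ => Vinf - V σ) hbt.le fun σ hσ =>
      (mul_nonneg hγ.le (exp_pos _).le).trans (hlow σ (hb₀.trans hσ.1))
    linarith
  have hle : ∀ s ∈ midpointSet V (Vinf - γ) t, a ≤ s := by
    intro s hsS
    by_contra! hsa
    have hs := hsS.1
    have hexp : (3 / 2 : ℝ)⁻¹ < exp (-Cm * s) := by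
      rw [← exp_neg_mul_log_div hCm.ne' (by norm_num)]
      exact exp_lt_exp.2 (mul_lt_mul_of_neg_left hsa (neg_lt_zero.2 hCm))
    have hDs := (mul_lt_mul_of_pos_left hexp hγ).trans_le (hlow s hs.1.le)
    have := avg_drag_le (t := t) hCp hγ.le hV hup hs.1.le (by linarith)
    have := (mem_midpointSet_iff hs (hint s hs.1.le hs.2.le)).1 hsS
    linarith
  obtain ⟨s₀, hs₀, hs₀b⟩ := exists_isLeast_of_isCompact_inter_Iic hb
    (isCompact_midpointSet_inter_Iic (hV.mono fun _ hσ => ha.le.trans hσ.1) ha hab hbt hle)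
  exact ⟨s₀, hs₀, hle s₀ hs₀.1, hs₀b⟩

theorem drag_correction_le {A B L γ s : ℝ} {m n : ℕ} (hA : 0 < A) (hB : 0 < B) (hγ : 0 < γ)
    (hγ₀ : γ ≤ √((9 * A)⁻¹)) (hL : 1 ≤ L) (hLc : (L ^ n)⁻¹ ≤ (9 * B)⁻¹ * γ) (hs : 0 ≤ s) :
    γ ^ 3 * (A / (1 + s) ^ m) + B / (L ^ n * (1 + s / L) ^ n) ≤ 2 * γ / 9 := by
  have hL₀ : 0 < L := one_pos.trans_le hL
  have hγA : γ ^ 2 * A ≤ 1 / 9 :=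
    calc γ ^ 2 * A ≤ (9 * A)⁻¹ * A :=
          mul_le_mul_of_nonneg_right ((le_sqrt hγ.le (by positivity)).1 hγ₀) hA.le
      _ = 1 / 9 := by field_simp
  have h₁ : γ ^ 3 * (A / (1 + s) ^ m) ≤ γ / 9 :=
    calc γ ^ 3 * (A / (1 + s) ^ m) ≤ γ * (γ ^ 2 * A) := by
          rw [← mul_assoc, ← pow_succ']
          exact mul_le_mul_of_nonneg_left (div_le_self hA.le (one_le_pow₀ (by linarith)))
            (by positivity)
      _ ≤ γ / 9 := by linarith [mul_le_mul_of_nonneg_left hγA hγ.le]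
  have h₂ : B / (L ^ n * (1 + s / L) ^ n) ≤ γ / 9 :=
    calc B / (L ^ n * (1 + s / L) ^ n) ≤ B / L ^ n :=
          div_le_div_of_nonneg_left hB.le (by positivity)
            (le_mul_of_one_le_right (by positivity)
              (one_le_pow₀ (le_add_of_nonneg_right (div_nonneg hs hL₀.le))))
      _ ≤ B * ((9 * B)⁻¹ * γ) := by rw [div_eq_mul_inv]; gcongr
      _ = γ / 9 := by field_simp
  linarith

theorem s0_exists_and_bounds_general (d : ℕ)
    (Cp Cm A B Vinf : ℝ) (hCp : 0 < Cp) (hCpm : Cp ≤ Cm)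
    (hA : 0 < A) (hB : 0 < B) :
    ∃ γ₀ c₀ tbar : ℝ, 0 < γ₀ ∧ 0 < c₀ ∧ 0 < tbar ∧
      ∀ γ : ℝ, 0 < γ → γ ≤ γ₀ →
        ∀ L : ℝ, 1 ≤ L → (L ^ (d - 1) : ℝ)⁻¹ ≤ c₀ * γ →
          0 < Vinf - γ →
          ∀ V : ℝ → ℝ, ContinuousOn V (Set.Ici 0) → V 0 = Vinf - γ →
            (∀ s : ℝ, 0 < s → Vinf - γ < V s) →
            (∀ s : ℝ, 0 ≤ s →
              γ * Real.exp (-Cm * s) ≤ Vinf - V s ∧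
              Vinf - V s ≤ γ * Real.exp (-Cp * s) + γ ^ 3 * (A / (1 + s) ^ (d + 2)) +
                B / (L ^ (d - 1) * (1 + s / L) ^ (d - 1))) →
            ∀ t : ℝ, tbar / 2 ≤ t →
              ∃ s₀ : ℝ,
                s₀ ∈ {s : ℝ | s ∈ Set.Ioo 0 t ∧ (Vinf - γ + avg V s t) / 2 ≤ V s} ∧
                (∀ s ∈ {s : ℝ | s ∈ Set.Ioo 0 t ∧ (Vinf - γ + avg V s t) / 2 ≤ V s},
                  s₀ ≤ s) ∧
                Real.log (3 / 2) / Cm ≤ s₀ ∧ s₀ ≤ Real.log 4 / Cp := by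
  refine ⟨√((9 * A)⁻¹), (9 * B)⁻¹, 2 * (log 4 / Cp + 9 / Cp), by positivity, by positivity,
    by positivity, ?_⟩
  intro γ hγ hγ₀ L hL hLc _ V hV _ _ hVbd t ht
  have hup : ∀ s, 0 ≤ s → Vinf - V s ≤ γ * exp (-Cp * s) + 2 * γ / 9 := fun s hs => by
    linarith [(hVbd s hs).2, drag_correction_le (m := d + 2) hA hB hγ hγ₀ hL hLc hs]
  obtain ⟨s₀, hs₀, hs₀a, hs₀b⟩ := exists_isLeast_midpointSet hCp hCpm hγ hV
    (fun s hs => (hVbd s hs).1) hup ((mul_div_cancel_left₀ _ two_ne_zero).symm.trans_le ht)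
  exact ⟨s₀, hs₀.1, hs₀.2, hs₀a, hs₀b⟩

/-- Claim (i) of Appendix A.3: for `t ≥ t̄/2`, the first time `s₀ = s₀(t)` at which
the velocity exceeds the midpoint `(V₀ + ⟨V⟩_{s,t})/2` exists (the set has a minimum)
and satisfies `C₋⁻¹ log(3/2) ≤ s₀ ≤ C₊⁻¹ log 4`. -/
theorem s0_exists_and_bounds (d : ℕ) (hd : 2 ≤ d)
    (Cp Cm A B Vinf : ℝ) (hCp : 0 < Cp) (hCpm : Cp ≤ Cm)
    (hA : 0 < A) (hB : 0 < B) (hVinf : 0 < Vinf) :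
    ∃ γ₀ c₀ tbar : ℝ, 0 < γ₀ ∧ 0 < c₀ ∧ 0 < tbar ∧
      ∀ γ : ℝ, 0 < γ → γ ≤ γ₀ →
        ∀ L : ℝ, 1 ≤ L → (L ^ (d - 1) : ℝ)⁻¹ ≤ c₀ * γ →
          0 < Vinf - γ →
          ∀ V : ℝ → ℝ, ContinuousOn V (Set.Ici 0) → V 0 = Vinf - γ →
            (∀ s : ℝ, 0 < s → Vinf - γ < V s) →
            (∀ s : ℝ, 0 ≤ s →
              γ * Real.exp (-Cm * s) ≤ Vinf - V s ∧
              Vinf - V s ≤ γ * Real.exp (-Cp * s) + γ ^ 3 * (A / (1 + s) ^ (d + 2)) +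
                B / (L ^ (d - 1) * (1 + s / L) ^ (d - 1))) →
            ∀ t : ℝ, tbar / 2 ≤ t →
              ∃ s₀ : ℝ,
                s₀ ∈ {s : ℝ | s ∈ Set.Ioo 0 t ∧ (Vinf - γ + avg V s t) / 2 ≤ V s} ∧
                (∀ s ∈ {s : ℝ | s ∈ Set.Ioo 0 t ∧ (Vinf - γ + avg V s t) / 2 ≤ V s},
                  s₀ ≤ s) ∧
                Real.log (3 / 2) / Cm ≤ s₀ ∧ s₀ ≤ Real.log 4 / Cp :=
  s0_exists_and_bounds_general d Cp Cm A B Vinf hCp hCpm hA hB
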